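/- Time-change construction of a solution of the singular transition-path ODE (from the Remark following the proof of Theorem 1): Let a: ℝ^d → ℝ^{d×d} and b: ℝ^d → ℝ^d be continuous, q: ℝ^d → ℝ be C¹, T > 0, and let z: [0,T] → ℝ^d be C¹ with z(0) = y₀, z'(s) = 2 a(z(s)) ∇q(z(s)) + q(z(s)) b(z(s)) for all s ∈ [0,T], and q(z(s)) > 0 for all s ∈ (0,T]. Define F(t) = ∫₀ᵗ q(z(s)) ds. Then F is a continuous, strictly increasing bijection from [0,T] onto [0, F(T)], and the function Ȳ := z ∘ F⁻¹ : [0, F(T)] → ℝ^d is continuous, satisfies Ȳ(0) = y₀ and q(Ȳ(t)) > 0 for t ∈ (0,F(T)], the map s ↦ b(Ȳ(s)) + 2 a(Ȳ(s)) ∇q(Ȳ(s)) / q(Ȳ(s)) is integrable on (0, F(T)], and Ȳ(t) = y₀ + ∫₀ᵗ [ b(Ȳ(s)) + 2 a(Ȳ(s)) ∇q(Ȳ(s)) / q(Ȳ(s)) ] ds for all t ∈ [0, F(T)]. -/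

import Mathlib

open scoped BigOperators
open Set MeasureTheory

/-- Partial derivative `∂ᵢ u (x)` on `ℝ^d = (Fin d → ℝ)`. -/
noncomputable def pd {d : ℕ} (i : Fin d) (u : (Fin d → ℝ) → ℝ) (x : Fin d → ℝ) : ℝ :=
  fderiv ℝ u x (Pi.single i 1)

/-- The drift `K(y) = b(y) + 2 a(y)∇q(y) / q(y)` of the transition path process
(its `i`-th component). -/
noncomputable def Kdrift {d : ℕ} (a : (Fin d → ℝ) → Fin d → Fin d → ℝ)
    (b : (Fin d → ℝ) → Fin d → ℝ) (q : (Fin d → ℝ) → ℝ)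
    (y : Fin d → ℝ) : Fin d → ℝ :=
  fun i => b y i + 2 * (∑ j, a y i j * pd j q y) / q y

/-!
The primitive `F` of `q ∘ z` is continuous and strictly increasing, since `q ∘ z > 0` on `(0, T]`,
so it has a continuous inverse `G` on `[0, F T]`. The substitution `u = F x`, `du = q (z x) dx`
(the one-dimensional change of variables for injective differentiable maps, applied on the open
interval where `F` is differentiable) turns `∫₀^{F τ} K (z (G u)) du` into
`∫₀^τ q (z x) • K (z x) dx = ∫₀^τ z' x dx = z τ - z 0`, because `q • K = 2 a ∇q + q b` wherever
`q ≠ 0`. The same substitution shows that the singular drift `K ∘ z ∘ G` is integrable.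
-/

open Function intervalIntegral

section InverseOfStrictMono

variable {α β : Type*} [ConditionallyCompleteLinearOrder α] [TopologicalSpace α] [OrderTopology α]
  [DenselyOrdered α] [LinearOrder β] [TopologicalSpace β] [OrderTopology β] {f : α → β} {a b : α}

theorem StrictMonoOn.continuousOn_invFunOn_Icc (hf_mono : StrictMonoOn f (Icc a b))
    (hf : ContinuousOn f (Icc a b)) (hab : a ≤ b) :
    ContinuousOn (invFunOn f (Icc a b)) (Icc (f a) (f b)) := by
  have himg : f '' Icc a b = Icc (f a) (f b) := hf.image_Icc_of_monotoneOn hab hf_mono.monotoneOn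
  have hsurj : SurjOn f (Icc a b) (Icc (f a) (f b)) := himg ▸ surjOn_image f _
  have hmaps := hsurj.mapsTo_invFunOn
  have hright := hsurj.rightInvOn_invFunOn
  let g : Icc (f a) (f b) → Icc a b := fun u => ⟨invFunOn f (Icc a b) u, hmaps u.2⟩
  have hg_mono : Monotone g := fun u v huv =>
    (hf_mono.le_iff_le (hmaps u.2) (hmaps v.2)).1 (by rwa [hright u.2, hright v.2])
  have hg_surj : Surjective g := fun x =>
    ⟨⟨f x, himg ▸ mem_image_of_mem f x.2⟩, Subtype.ext (hf_mono.injOn.leftInvOn_invFunOn x.2)⟩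
  rw [continuousOn_iff_continuous_domRestrict]
  exact continuous_subtype_val.comp (hg_mono.continuous_of_surjective hg_surj)

theorem StrictMonoOn.mapsTo_invFunOn_Ioc (hf_mono : StrictMonoOn f (Icc a b))
    (hf : ContinuousOn f (Icc a b)) (hab : a ≤ b) :
    MapsTo (invFunOn f (Icc a b)) (Ioc (f a) (f b)) (Ioc a b) := by
  rw [← hf.image_Ioc_of_strictMonoOn hab hf_mono]
  rintro _ ⟨x, hx, rfl⟩
  rwa [hf_mono.injOn.leftInvOn_invFunOn (Ioc_subset_Icc_self hx)]

end InverseOfStrictMono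

section Primitive

variable {φ : ℝ → ℝ} {a b : ℝ}

theorem strictMonoOn_primitive_of_pos (hφ : IntegrableOn φ (Icc a b))
    (hpos : ∀ s ∈ Ioo a b, 0 < φ s) : StrictMonoOn (fun t => ∫ s in a..t, φ s) (Icc a b) := by
  intro t₁ ht₁ t₂ ht₂ hlt
  have hint : ∀ {u v}, u ∈ Icc a b → v ∈ Icc a b → IntervalIntegrable φ volume u v :=
    fun hu hv => (hφ.mono_set (uIcc_subset_Icc hu hv)).intervalIntegrable
  have ha : a ∈ Icc a b := left_mem_Icc.2 (ht₁.1.trans ht₁.2)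
  rw [← sub_pos, integral_interval_sub_left (hint ha ht₂) (hint ha ht₁)]
  exact intervalIntegral_pos_of_pos_on (hint ht₁ ht₂)
    (fun s hs => hpos s ⟨ht₁.1.trans_lt hs.1, hs.2.trans_le ht₂.2⟩) hlt

theorem continuousOn_primitive_Icc (hab : a ≤ b) (hφ : IntegrableOn φ (Icc a b)) :
    ContinuousOn (fun t => ∫ s in a..t, φ s) (Icc a b) := by
  rw [← uIcc_of_le hab] at hφ ⊢
  exact continuousOn_primitive_interval hφ

theorem hasDerivAt_primitive_of_continuousOn (hφ : ContinuousOn φ (Icc a b)) {x : ℝ}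
    (hx : x ∈ Ioo a b) : HasDerivAt (fun t => ∫ s in a..t, φ s) (φ x) x :=
  integral_hasDerivAt_right
    ((hφ.mono (Icc_subset_Icc_right hx.2.le)).intervalIntegrable_of_Icc hx.1.le)
    ((hφ.mono Ioo_subset_Icc_self).stronglyMeasurableAtFilter isOpen_Ioo x hx)
    (hφ.continuousAt (Icc_mem_nhds hx.1 hx.2))

theorem image_Ioo_primitive (hab : a ≤ b) (hφ : ContinuousOn φ (Icc a b))
    (hpos : ∀ s ∈ Ioo a b, 0 < φ s) :
    (fun t => ∫ s in a..t, φ s) '' Ioo a b = Ioo 0 (∫ s in a..b, φ s) := by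
  rw [(continuousOn_primitive_Icc hab hφ.integrableOn_Icc).image_Ioo_of_strictMonoOn hab
    (strictMonoOn_primitive_of_pos hφ.integrableOn_Icc hpos), integral_same]

variable {E : Type*} [NormedAddCommGroup E] [NormedSpace ℝ E]

theorem integrableOn_Ioo_primitive_iff
    (hab : a ≤ b) (hφ : ContinuousOn φ (Icc a b)) (hpos : ∀ s ∈ Ioo a b, 0 < φ s) (g : ℝ → E) :
    IntegrableOn g (Ioo 0 (∫ s in a..b, φ s)) ↔
      IntegrableOn (fun x => φ x • g (∫ s in a..x, φ s)) (Ioo a b) := by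
  rw [← image_Ioo_primitive hab hφ hpos, integrableOn_image_iff_integrableOn_abs_deriv_smul
    measurableSet_Ioo (fun x hx => (hasDerivAt_primitive_of_continuousOn hφ hx).hasDerivWithinAt)
    ((strictMonoOn_primitive_of_pos hφ.integrableOn_Icc hpos).injOn.mono Ioo_subset_Icc_self)]
  exact integrableOn_congr_fun (fun x hx => by rw [abs_of_pos (hpos x hx)]) measurableSet_Ioo

theorem integral_Ioo_primitive
    (hab : a ≤ b) (hφ : ContinuousOn φ (Icc a b)) (hpos : ∀ s ∈ Ioo a b, 0 < φ s) (g : ℝ → E) :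
    ∫ u in Ioo 0 (∫ s in a..b, φ s), g u = ∫ x in Ioo a b, φ x • g (∫ s in a..x, φ s) := by
  rw [← image_Ioo_primitive hab hφ hpos, integral_image_eq_integral_abs_deriv_smul
    measurableSet_Ioo (fun x hx => (hasDerivAt_primitive_of_continuousOn hφ hx).hasDerivWithinAt)
    ((strictMonoOn_primitive_of_pos hφ.integrableOn_Icc hpos).injOn.mono Ioo_subset_Icc_self)]
  exact setIntegral_congr_fun measurableSet_Ioo (fun x hx => by rw [abs_of_pos (hpos x hx)])

theorem integral_Ioo_primitive_eq_sub [CompleteSpace E] {z v g : ℝ → E}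
    (hφ : ContinuousOn φ (Icc a b)) (hpos : ∀ s ∈ Ioo a b, 0 < φ s)
    (hz : ∀ x ∈ Ioo a b, HasDerivAt z (v x) x) (hzc : ContinuousOn z (Icc a b))
    (hv : IntegrableOn v (Icc a b)) (hg : ∀ x ∈ Ioo a b, φ x • g (∫ s in a..x, φ s) = v x)
    {τ : ℝ} (hτ : τ ∈ Icc a b) :
    ∫ u in Ioo 0 (∫ s in a..τ, φ s), g u = z τ - z a := by
  have hτb : Icc a τ ⊆ Icc a b := Icc_subset_Icc_right hτ.2
  have hIoo : ∀ {x}, x ∈ Ioo a τ → x ∈ Ioo a b := fun hx => ⟨hx.1, hx.2.trans_le hτ.2⟩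
  rw [integral_Ioo_primitive hτ.1 (hφ.mono hτb) (fun x hx => hpos x (hIoo hx)),
    setIntegral_congr_fun measurableSet_Ioo (fun x hx => hg x (hIoo hx)),
    ← integral_Ioc_eq_integral_Ioo, ← integral_of_le hτ.1]
  exact integral_eq_sub_of_hasDerivAt_of_le hτ.1 (hzc.mono hτb) (fun x hx => hz x (hIoo hx))
    ((intervalIntegrable_iff_integrableOn_Icc_of_le hτ.1).2 (hv.mono_set hτb))

end Primitive

section Drift

noncomputable def desingularizedDrift {d : ℕ} (a : (Fin d → ℝ) → Fin d → Fin d → ℝ)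
    (b : (Fin d → ℝ) → Fin d → ℝ) (q : (Fin d → ℝ) → ℝ) (y : Fin d → ℝ) : Fin d → ℝ :=
  fun i => 2 * (∑ j, a y i j * pd j q y) + q y * b y i

variable {d : ℕ} {a : (Fin d → ℝ) → Fin d → Fin d → ℝ} {b : (Fin d → ℝ) → Fin d → ℝ}
  {q : (Fin d → ℝ) → ℝ}

theorem smul_Kdrift {y : Fin d → ℝ} (hy : q y ≠ 0) :
    q y • Kdrift a b q y = desingularizedDrift a b q y := by
  funext i
  simp only [Pi.smul_apply, smul_eq_mul, Kdrift, desingularizedDrift]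
  field_simp
  ring

theorem continuous_pd {u : (Fin d → ℝ) → ℝ} (hu : ContDiff ℝ 1 u) (i : Fin d) :
    Continuous (pd i u) :=
  (hu.continuous_fderiv one_ne_zero).clm_apply continuous_const

theorem continuous_desingularizedDrift (ha : Continuous a) (hb : Continuous b)
    (hq : ContDiff ℝ 1 q) : Continuous (desingularizedDrift a b q) := by
  have := continuous_pd hq
  unfold desingularizedDrift
  fun_prop

end Drift

theorem time_change_construction_general {d : ℕ}
    (a : (Fin d → ℝ) → Fin d → Fin d → ℝ) (b : (Fin d → ℝ) → Fin d → ℝ)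
    (ha : Continuous a) (hb : Continuous b)
    (q : (Fin d → ℝ) → ℝ) (hq : ContDiff ℝ 1 q)
    (T : ℝ) (hT : 0 < T) (y₀ : Fin d → ℝ)
    (z : ℝ → Fin d → ℝ) (hz0 : z 0 = y₀)
    (hz' : ∀ s ∈ Icc (0 : ℝ) T,
      HasDerivWithinAt z
        (fun i => 2 * (∑ j, a (z s) i j * pd j q (z s)) + q (z s) * b (z s) i)
        (Icc (0 : ℝ) T) s)
    (hqz : ∀ s ∈ Ioc (0 : ℝ) T, 0 < q (z s))
    (F : ℝ → ℝ) (hF : F = fun t => ∫ s in (0 : ℝ)..t, q (z s)) :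
    StrictMonoOn F (Icc (0 : ℝ) T) ∧ ContinuousOn F (Icc (0 : ℝ) T) ∧
    F '' Icc (0 : ℝ) T = Icc (0 : ℝ) (F T) ∧
    ∃ G : ℝ → ℝ,
      (∀ t ∈ Icc (0 : ℝ) T, G (F t) = t) ∧
      (∀ u ∈ Icc (0 : ℝ) (F T), F (G u) = u) ∧
      ContinuousOn (fun t => z (G t)) (Icc (0 : ℝ) (F T)) ∧
      z (G 0) = y₀ ∧
      (∀ t ∈ Ioc (0 : ℝ) (F T), 0 < q (z (G t))) ∧
      IntegrableOn (fun s => Kdrift a b q (z (G s))) (Ioc (0 : ℝ) (F T)) ∧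
      ∀ t ∈ Icc (0 : ℝ) (F T),
        z (G t) = y₀ + ∫ s in (0 : ℝ)..t, Kdrift a b q (z (G s)) := by
  subst hF
  set F := fun t => ∫ s in (0 : ℝ)..t, q (z s)
  have hzc : ContinuousOn z (Icc 0 T) := fun s hs => (hz' s hs).continuousWithinAt
  have hz_deriv : ∀ x ∈ Ioo 0 T, HasDerivAt z (desingularizedDrift a b q (z x)) x :=
    fun x hx => (hz' x (Ioo_subset_Icc_self hx)).hasDerivAt (Icc_mem_nhds hx.1 hx.2)
  have hqz_cont : ContinuousOn (fun s => q (z s)) (Icc 0 T) := hq.continuous.comp_continuousOn hzc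
  have hqz_pos : ∀ s ∈ Ioo 0 T, 0 < q (z s) := fun s hs => hqz s (Ioo_subset_Ioc_self hs)
  have hF_mono : StrictMonoOn F (Icc 0 T) :=
    strictMonoOn_primitive_of_pos hqz_cont.integrableOn_Icc hqz_pos
  have hF_cont : ContinuousOn F (Icc 0 T) :=
    continuousOn_primitive_Icc hT.le hqz_cont.integrableOn_Icc
  have hF0 : F 0 = 0 := integral_same
  have himg : F '' Icc 0 T = Icc 0 (F T) := by
    rw [hF_cont.image_Icc_of_monotoneOn hT.le hF_mono.monotoneOn, hF0]
  refine ⟨hF_mono, hF_cont, himg, invFunOn F (Icc 0 T), ?_⟩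
  set G := invFunOn F (Icc 0 T)
  have hGF : LeftInvOn G F (Icc 0 T) := hF_mono.injOn.leftInvOn_invFunOn
  have hG0 : G 0 = 0 := by simpa [hF0] using hGF (left_mem_Icc.2 hT.le)
  have hG_pos : MapsTo G (Ioc 0 (F T)) (Ioc 0 T) := by
    simpa only [hF0] using hF_mono.mapsTo_invFunOn_Ioc hF_cont hT.le
  have hK : ∀ x ∈ Ioo 0 T,
      q (z x) • Kdrift a b q (z (G (F x))) = desingularizedDrift a b q (z x) := fun x hx => by
    rw [hGF (Ioo_subset_Icc_self hx), smul_Kdrift (hqz_pos x hx).ne']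
  have hw_int : IntegrableOn (fun x => desingularizedDrift a b q (z x)) (Icc 0 T) :=
    ((continuous_desingularizedDrift ha hb hq).comp_continuousOn hzc).integrableOn_Icc
  refine ⟨hGF, himg ▸ (surjOn_image F _).rightInvOn_invFunOn,
    hzc.comp (hF0 ▸ hF_mono.continuousOn_invFunOn_Icc hF_cont hT.le)
      (himg ▸ (surjOn_image F _).mapsTo_invFunOn),
    by rw [hG0, hz0], fun t ht => hqz _ (hG_pos ht), ?_, ?_⟩
  · rw [integrableOn_Ioc_iff_integrableOn_Ioo,
      integrableOn_Ioo_primitive_iff hT.le hqz_cont hqz_pos]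
    exact (hw_int.mono_set Ioo_subset_Icc_self).congr_fun (fun x hx => (hK x hx).symm)
      measurableSet_Ioo
  · intro t ht
    obtain ⟨τ, hτ, rfl⟩ : t ∈ F '' Icc 0 T := himg ▸ ht
    have h := integral_Ioo_primitive_eq_sub hqz_cont hqz_pos hz_deriv hzc hw_int
      (g := fun s => Kdrift a b q (z (G s))) hK hτ
    rw [hGF hτ, integral_of_le (hF0 ▸ ht.1), integral_Ioc_eq_integral_Ioo, ← hz0]
    exact eq_add_of_sub_eq' h.symm

/-- Time-change construction: reparametrizing a solution `z` of the desingularized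
ODE `z' = 2a(z)∇q(z) + q(z)b(z)` by the inverse of `F(t) = ∫₀ᵗ q(z(s)) ds`
produces a solution `Ȳ = z ∘ F⁻¹` of the singular integral equation
`Ȳ(t) = y₀ + ∫₀ᵗ K(Ȳ(s)) ds`. -/
theorem time_change_construction {d : ℕ} (hd : 1 ≤ d)
    (a : (Fin d → ℝ) → Fin d → Fin d → ℝ) (b : (Fin d → ℝ) → Fin d → ℝ)
    (ha : Continuous a) (hb : Continuous b)
    (q : (Fin d → ℝ) → ℝ) (hq : ContDiff ℝ 1 q)
    (T : ℝ) (hT : 0 < T) (y₀ : Fin d → ℝ)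
    (z : ℝ → Fin d → ℝ) (hz0 : z 0 = y₀)
    (hz' : ∀ s ∈ Icc (0 : ℝ) T,
      HasDerivWithinAt z
        (fun i => 2 * (∑ j, a (z s) i j * pd j q (z s)) + q (z s) * b (z s) i)
        (Icc (0 : ℝ) T) s)
    (hqz : ∀ s ∈ Ioc (0 : ℝ) T, 0 < q (z s))
    (F : ℝ → ℝ) (hF : F = fun t => ∫ s in (0 : ℝ)..t, q (z s)) :
    StrictMonoOn F (Icc (0 : ℝ) T) ∧ ContinuousOn F (Icc (0 : ℝ) T) ∧
    F '' Icc (0 : ℝ) T = Icc (0 : ℝ) (F T) ∧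
    ∃ G : ℝ → ℝ,
      (∀ t ∈ Icc (0 : ℝ) T, G (F t) = t) ∧
      (∀ u ∈ Icc (0 : ℝ) (F T), F (G u) = u) ∧
      ContinuousOn (fun t => z (G t)) (Icc (0 : ℝ) (F T)) ∧
      z (G 0) = y₀ ∧
      (∀ t ∈ Ioc (0 : ℝ) (F T), 0 < q (z (G t))) ∧
      IntegrableOn (fun s => Kdrift a b q (z (G s))) (Ioc (0 : ℝ) (F T)) ∧
      ∀ t ∈ Icc (0 : ℝ) (F T),
        z (G t) = y₀ + ∫ s in (0 : ℝ)..t, Kdrift a b q (z (G s)) :=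
  time_change_construction_general a b ha hb q hq T hT y₀ z hz0 hz' hqz F hF
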